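/- arXiv:1704.03070 — 2 statements merged into one kernel-verified Lean document; each statement's English description precedes it below -/
import Mathlib

section
/- Let ℓ : ℕ → ℝ be any real sequence (indexed from 1), let S_j^t = Σ_{i=j}^t ℓ_i for 1 ≤ j ≤ t, let M_t = max_{1 ≤ j ≤ t} S_j^t be the CUSUM statistic and g_t = max_{1 ≤ n₁ ≤ n₂ ≤ t} S_{n₁}^{n₂} be the discrepancy statistic. Then for every threshold h ∈ ℝ, the first hitting times coincide: inf{t ≥ 1 : M_t ≥ h} = inf{t ≥ 1 : g_t ≥ h} (as elements of ℕ ∪ {∞}; in particular one is finite iff the other is, and then they are equal). -/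
/-- Partial sum `S_j^t = ∑_{i=j}^t ℓ i`. -/
noncomputable def partialSum (ℓ : ℕ → ℝ) (j t : ℕ) : ℝ := ∑ i ∈ Finset.Icc j t, ℓ i

/-- CUSUM statistic `M_t = max_{1 ≤ j ≤ t} S_j^t` (junk value `0` for `t = 0`). -/
noncomputable def cusumStat (ℓ : ℕ → ℝ) (t : ℕ) : ℝ :=
  if ht : 1 ≤ t then
    (Finset.Icc 1 t).sup' (Finset.nonempty_Icc.mpr ht) (fun j => partialSum ℓ j t)
  else 0

/-- Discrepancy statistic `g_t = max_{1 ≤ n₁ ≤ n₂ ≤ t} S_{n₁}^{n₂}` (junk value `0` for `t = 0`). -/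
noncomputable def discStat (ℓ : ℕ → ℝ) (t : ℕ) : ℝ :=
  if ht : 1 ≤ t then
    ((Finset.Icc 1 t ×ˢ Finset.Icc 1 t).filter fun p => p.1 ≤ p.2).sup'
      ⟨(1, 1), by simp [Finset.mem_filter, Finset.mem_product, Finset.mem_Icc, ht]⟩
      (fun p => partialSum ℓ p.1 p.2)
  else 0

/-- First hitting time `inf {t ≥ 1 : f t ≥ h}` as an element of `ℕ ∪ {∞}`
(the infimum of the empty set being `∞`). -/
noncomputable def hittingTime (f : ℕ → ℝ) (h : ℝ) : ℕ∞ :=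
  sInf {t : ℕ∞ | ∃ n : ℕ, t = (n : ℕ∞) ∧ 1 ≤ n ∧ h ≤ f n}

lemma cusum_le_disc (ℓ : ℕ → ℝ) {t : ℕ} (ht : 1 ≤ t) : cusumStat ℓ t ≤ discStat ℓ t := by
  rw [cusumStat, discStat, dif_pos ht, dif_pos ht]
  apply Finset.sup'_le
  intro j hj
  have hmem : (j, t) ∈ (Finset.Icc 1 t ×ˢ Finset.Icc 1 t).filter fun p => p.1 ≤ p.2 := by
    simp only [Finset.mem_filter, Finset.mem_product]
    refine ⟨⟨hj, ?_⟩, ?_⟩ <;> simp_all [Finset.mem_Icc]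
  exact Finset.le_sup' (fun p : ℕ × ℕ => partialSum ℓ p.1 p.2) hmem

lemma disc_hit (ℓ : ℕ → ℝ) {h : ℝ} {t : ℕ} (ht : 1 ≤ t) (hh : h ≤ discStat ℓ t) :
    ∃ m, 1 ≤ m ∧ m ≤ t ∧ h ≤ cusumStat ℓ m := by
  rw [discStat, dif_pos ht] at hh
  obtain ⟨p, hp, hmax⟩ := Finset.exists_mem_eq_sup'
    (⟨(1, 1), by simp [Finset.mem_filter, Finset.mem_product, Finset.mem_Icc, ht]⟩ :
      ((Finset.Icc 1 t ×ˢ Finset.Icc 1 t).filter fun p => p.1 ≤ p.2).Nonempty)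
    (fun p : ℕ × ℕ => partialSum ℓ p.1 p.2)
  rw [hmax] at hh
  simp only [Finset.mem_filter, Finset.mem_product, Finset.mem_Icc] at hp
  obtain ⟨⟨⟨h11, h12⟩, h21, h22⟩, hle⟩ := hp
  refine ⟨p.2, h21, h22, ?_⟩
  refine hh.trans ?_
  rw [cusumStat, dif_pos h21]
  exact Finset.le_sup' (fun j => partialSum ℓ j p.2) (Finset.mem_Icc.mpr ⟨h11, hle⟩)

/-- **Theorem 1 (Discrepancy and CUSUM).** For any real sequence `ℓ` (indexed from 1) and any
threshold `h`, the first hitting time of the CUSUM statistic `M_t = max_{1 ≤ j ≤ t} S_j^t`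
coincides with the first hitting time of the discrepancy statistic
`g_t = max_{1 ≤ n₁ ≤ n₂ ≤ t} S_{n₁}^{n₂}`. -/
theorem cusum_discrepancy_hitting_time_eq (ℓ : ℕ → ℝ) (h : ℝ) :
    hittingTime (cusumStat ℓ) h = hittingTime (discStat ℓ) h := by
  apply le_antisymm
  · apply le_sInf
    rintro t ⟨n, rfl, hn, hh⟩
    obtain ⟨m, hm1, hmn, hmh⟩ := disc_hit ℓ hn hh
    exact le_trans (sInf_le ⟨m, rfl, hm1, hmh⟩) (by exact_mod_cast hmn)
  · apply le_sInf
    rintro t ⟨n, rfl, hn, hh⟩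
    exact sInf_le ⟨n, rfl, hn, hh.trans (cusum_le_disc ℓ hn)⟩
end

section
/- Let ℓ : ℕ → ℝ be any real sequence (indexed from 1), let S_j^t = Σ_{i=j}^t ℓ_i for 1 ≤ j ≤ t, let M_t = max_{1 ≤ j ≤ t} S_j^t and g_t = max_{1 ≤ n₁ ≤ n₂ ≤ t} S_{n₁}^{n₂}, and let h ∈ ℝ. If t* ≥ 1 is the first time with g_{t*} ≥ h (i.e., g_{t*} ≥ h and g_s < h for all 1 ≤ s < t*), then M_{t*} = g_{t*}; that is, at the stopping time the CUSUM statistic and the discrepancy statistic are equal. -/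
/-- At the first time `t*` where the discrepancy statistic reaches the threshold `h`
(i.e., `g_{t*} ≥ h` and `g_s < h` for all `1 ≤ s < t*`), the CUSUM statistic and the
discrepancy statistic are equal: `M_{t*} = g_{t*}`. -/
theorem cusum_eq_discrepancy_at_stopping_time (ℓ : ℕ → ℝ) (h : ℝ) (tstar : ℕ)
    (htstar : 1 ≤ tstar) (hcross : h ≤ discStat ℓ tstar)
    (hbefore : ∀ s : ℕ, 1 ≤ s → s < tstar → discStat ℓ s < h) :
    cusumStat ℓ tstar = discStat ℓ tstar := by
  classical
  rw [cusumStat, discStat, dif_pos htstar, dif_pos htstar]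
  rw [discStat, dif_pos htstar] at hcross
  set T := (Finset.Icc 1 tstar ×ˢ Finset.Icc 1 tstar).filter fun p : ℕ × ℕ => p.1 ≤ p.2 with hT
  have hTne : T.Nonempty :=
    ⟨(1, 1), by simp [hT, Finset.mem_filter, Finset.mem_product, Finset.mem_Icc, htstar]⟩
  apply le_antisymm
  · -- M ≤ g
    apply Finset.sup'_le
    intro j hj
    apply Finset.le_sup' (f := fun p : ℕ × ℕ => partialSum ℓ p.1 p.2) (b := (j, tstar))
    simp only [hT, Finset.mem_filter, Finset.mem_product, Finset.mem_Icc] at hj ⊢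
    exact ⟨⟨hj, le_refl 1 |>.trans htstar, le_refl tstar⟩, hj.2⟩
  · -- g ≤ M : take maximizer (n1, n2); show n2 = tstar
    obtain ⟨p, hp, hpeq⟩ := Finset.exists_mem_eq_sup' hTne (fun p : ℕ × ℕ => partialSum ℓ p.1 p.2)
    simp only [hT, Finset.mem_filter, Finset.mem_product, Finset.mem_Icc] at hp
    obtain ⟨⟨⟨h1n1, hn1t⟩, ⟨h1n2, hn2t⟩⟩, h12⟩ := hp
    have hn2 : p.2 = tstar := by
      by_contra hne
      have hlt : p.2 < tstar := lt_of_le_of_ne hn2t hne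
      have hle : T.sup' hTne (fun p : ℕ × ℕ => partialSum ℓ p.1 p.2) ≤ discStat ℓ p.2 := by
        rw [hpeq, discStat, dif_pos h1n2]
        apply Finset.le_sup' (f := fun p : ℕ × ℕ => partialSum ℓ p.1 p.2) (b := p)
        simp [Finset.mem_filter, Finset.mem_product, Finset.mem_Icc, h1n1, h12, h1n2, h12]
      exact absurd (hcross.trans hle) (not_le.mpr (hbefore p.2 h1n2 hlt))
    rw [hpeq]
    have := Finset.le_sup' (f := fun j => partialSum ℓ j tstar)
      (b := p.1) (s := Finset.Icc 1 tstar) (by simp [Finset.mem_Icc, h1n1, hn1t])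
    rw [hn2]; exact this
end
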